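/- Let C be an o-symmetric convex disk in ℝ² and let x, y ∈ ℝ². Then [x,y]_C equals the segment [x,y] if and only if some translate of C contains the segment [x,y] in its boundary. -/

import Mathlib

open Set

noncomputable section

/-- The plane. -/
abbrev P2 := ℝ × ℝ

/-- The translate of `C` by the vector `x`. -/
def tr (C : Set P2) (x : P2) : Set P2 := (x + ·) '' C

/-- The `C`-spindle of `p` and `q`: the intersection of all translates of `C` containing both
`p` and `q` (equal to all of `ℝ²` if there is no such translate). -/
def spindle (C : Set P2) (p q : P2) : Set P2 :=
  ⋂ x ∈ {x : P2 | p ∈ tr C x ∧ q ∈ tr C x}, tr C x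

/-- `K` is `C`-(spindle) convex. -/
def CConvexSet (C K : Set P2) : Prop := ∀ p ∈ K, ∀ q ∈ K, spindle C p q ⊆ K

/-- `C` is an `o`-symmetric convex disk: compact, convex, with nonempty interior,
symmetric about the origin. -/
def SymDisk (C : Set P2) : Prop :=
  IsCompact C ∧ Convex ℝ C ∧ (interior C).Nonempty ∧ ∀ x ∈ C, -x ∈ C

/-- A convex body (convex disk) in the plane. -/
def ConvBody (K : Set P2) : Prop := IsCompact K ∧ Convex ℝ K ∧ (interior K).Nonempty

/-- Cross product (orientation determinant) of two plane vectors. -/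
def detv (a b : P2) : ℝ := a.1 * b.2 - a.2 * b.1

/-- A (cyclic) list of points is in (weak) counterclockwise convex position order. -/
def InConvexOrder {m : ℕ} (v : Fin m → P2) : Prop :=
  ∀ i j k : Fin m, i < j → j < k → 0 ≤ detv (v j - v i) (v k - v i)

/-- The `C`-perimeter of a set `K`: the supremum of the `C`-perimeters of convex polygons
inscribed in `K`, a polygon being given by a closed cyclic sequence of vertices in
counterclockwise convex position, with side lengths measured by the gauge (Minkowski
functional) of `C`. -/
def CPerim (C K : Set P2) : ℝ :=
  sSup {s | ∃ m : ℕ, ∃ v : Fin (m + 1) → P2, (∀ i, v i ∈ K) ∧ InConvexOrder v ∧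
    v (Fin.last m) = v 0 ∧ s = ∑ i : Fin m, gauge C (v i.succ - v i.castSucc)}

/-- The `C`-length of a curve `γ : [0,1] → ℝ²`: supremum of inscribed polygonal
`‖·‖_C`-lengths. -/
def CLength (C : Set P2) (γ : ℝ → P2) : ℝ :=
  sSup {s | ∃ n : ℕ, ∃ t : Fin (n + 1) → ℝ, Monotone t ∧ t 0 = 0 ∧ t (Fin.last n) = 1 ∧
    s = ∑ i : Fin n, gauge C (γ (t i.succ) - γ (t i.castSucc))}

/-- The set of `C`-lengths of arcs joining `x` and `y` contained in the boundary of some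
translate of `C`. -/
def arcSet (C : Set P2) (x y : P2) : Set ℝ :=
  {s | ∃ z : P2, ∃ γ : ℝ → P2, ContinuousOn γ (Icc 0 1) ∧ γ 0 = x ∧ γ 1 = y ∧
    γ '' Icc 0 1 ⊆ frontier (tr C z) ∧ s = CLength C γ}

/-- The `C`-arc-distance of `x` and `y`. -/
def arcDist (C : Set P2) (x y : P2) : ℝ := sInf (arcSet C x y)

/-- The `C`-convex hull of `X`: the intersection of all translates of `C` containing `X`. -/
def convC (C X : Set P2) : Set P2 := ⋂ x ∈ {x : P2 | X ⊆ tr C x}, tr C x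

/-- `Q` is a `C`-`n`-gon: an intersection of `n` translates of `C`. -/
def Cngon (C : Set P2) (n : ℕ) (Q : Set P2) : Prop :=
  ∃ x : Fin n → P2, Q = ⋂ i, tr C (x i)

/-- `K` is an intersection of translates of `C`. -/
def IsCIntersection (C K : Set P2) : Prop := ∃ T : Set P2, K = ⋂ x ∈ T, tr C x

/-- `â_n^C(K)`: the supremum of the areas of `C`-`n`-gons inscribed in `K`. -/
def ahat (C : Set P2) (n : ℕ) (K : Set P2) : ℝ :=
  sSup {s | ∃ Q : Set P2, Cngon C n Q ∧ Q ⊆ K ∧ s = (MeasureTheory.volume Q).toReal}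

/-- `Â_n^C(K)`: the infimum of the areas of `C`-`n`-gons circumscribed about `K`. -/
def Ahat (C : Set P2) (n : ℕ) (K : Set P2) : ℝ :=
  sInf {s | ∃ Q : Set P2, Cngon C n Q ∧ K ⊆ Q ∧ s = (MeasureTheory.volume Q).toReal}

/-- `p̂_n^C(K)`: the supremum of the `C`-perimeters of `C`-`n`-gons inscribed in `K`. -/
def phat (C : Set P2) (n : ℕ) (K : Set P2) : ℝ :=
  sSup {s | ∃ Q : Set P2, Cngon C n Q ∧ Q ⊆ K ∧ s = CPerim C Q}

/-- `P̂_n^C(K)`: the infimum of the `C`-perimeters of `C`-`n`-gons circumscribed about `K`. -/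
def Phat (C : Set P2) (n : ℕ) (K : Set P2) : ℝ :=
  sInf {s | ∃ Q : Set P2, Cngon C n Q ∧ K ⊆ Q ∧ s = CPerim C Q}

end

/-!
If no translate of `C` has `[x, y]` in its boundary, then every translate through `x` and `y`
contains the midpoint `m` in its interior, since a convex set whose boundary meets the relative
interior of a chord contains the whole chord in its boundary. These translates form a compact
family, so a whole neighbourhood of `m` lies in all of them, that is, in the spindle, which
therefore is not a segment.

Conversely, let `[x, y]` lie in the boundary of `K = z + C`, with supporting functional `f`.
By symmetry of `C`, the reflection `x + y - K` of `K` in `m` is again a translate through `x`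
and `y`; it lies on the other side of the supporting line, so the spindle lies on that line.
Sliding `K` along the line until `x` (or `y`) becomes an endpoint of the chord cut out by the
line shows that the spindle does not extend beyond `x` or `y`.
-/

open Filter Topology AffineMap Module

section ConvexGeometry

variable {E : Type*} [AddCommGroup E] [Module ℝ E] [TopologicalSpace E] [IsTopologicalAddGroup E]
  [ContinuousSMul ℝ E] {K : Set E} {x y : E}

theorem Convex.segment_subset_frontier (hK : Convex ℝ K) (hx : x ∈ K) (hy : y ∈ K)
    (hm : midpoint ℝ x y ∉ interior K) : segment ℝ x y ⊆ frontier K := by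
  rintro q ⟨a, b, ha, hb, hab, rfl⟩
  refine ⟨subset_closure (hK hx hy ha hb hab), fun hq => hm ?_⟩
  have hq' : b • x + a • y ∈ K := hK hx hy hb ha (by linarith)
  have hmid : midpoint ℝ x y = midpoint ℝ (a • x + b • y) (b • x + a • y) := by
    simp only [midpoint_eq_smul_add]
    congr 1
    rw [← one_smul ℝ (x + y), ← hab]
    module
  rw [hmid]
  exact hK.openSegment_interior_self_subset_interior hq hq' (midpoint_mem_openSegment _ _)

theorem Convex.exists_forall_le_of_notMem_interior (hK : Convex ℝ K) (hint : (interior K).Nonempty)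
    {b : E} (hb : b ∉ interior K) : ∃ f : E →L[ℝ] ℝ, f ≠ 0 ∧ ∀ c ∈ K, f c ≤ f b := by
  obtain ⟨f, hf⟩ := geometric_hahn_banach_open_point hK.interior isOpen_interior hb
  obtain ⟨a, ha⟩ := hint
  refine ⟨f, fun h0 => by simpa [h0] using hf a ha, fun c hc => ?_⟩
  have hcl : closure (interior K) ⊆ {c | f c ≤ f b} :=
    closure_minimal (fun a ha => (hf a ha).le) (isClosed_le f.continuous continuous_const)
  rw [hK.closure_interior_eq_closure_of_nonempty_interior ⟨a, ha⟩] at hcl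
  exact hcl (subset_closure hc)

end ConvexGeometry

theorem interior_segment_eq_empty {E : Type*} [NormedAddCommGroup E] [NormedSpace ℝ E]
    [FiniteDimensional ℝ E] (hE : 1 < finrank ℝ E) (x y : E) : interior (segment ℝ x y) = ∅ := by
  by_contra h
  have hspan := (convex_segment x y).interior_nonempty_iff_affineSpan_eq_top.1
    (nonempty_iff_ne_empty.2 h)
  rw [← convexHull_pair, affineSpan_convexHull] at hspan
  have hcol := collinear_iff_finrank_le_one.1 (collinear_pair ℝ x y)
  rw [← direction_affineSpan, hspan, AffineSubspace.direction_top, finrank_top] at hcol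
  omega

theorem exists_smul_eq_of_apply_eq_zero {V : Type*} [AddCommGroup V] [Module ℝ V]
    [FiniteDimensional ℝ V] (hV : finrank ℝ V = 2) {f : Dual ℝ V} (hf : f ≠ 0) {u w : V}
    (hu : u ≠ 0) (hfu : f u = 0) (hfw : f w = 0) : ∃ c : ℝ, c • u = w := by
  have hker : finrank ℝ (LinearMap.ker f) = 1 := by
    have := Dual.finrank_ker_add_one_of_ne_zero hf
    omega
  obtain ⟨c, hc⟩ := (finrank_eq_one_iff_of_nonzero' (⟨u, hfu⟩ : LinearMap.ker f)
    (by simpa [Subtype.ext_iff] using hu)).1 hker ⟨w, hfw⟩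
  exact ⟨c, congrArg Subtype.val hc⟩

section Spindle

variable {C : Set P2} {x y z p : P2}

theorem mem_tr : p ∈ tr C z ↔ p - z ∈ C := by
  constructor
  · rintro ⟨c, hc, rfl⟩
    simpa using hc
  · intro h
    exact ⟨p - z, h, add_sub_cancel z p⟩

theorem tr_eq_preimage (C : Set P2) (z : P2) : tr C z = (· - z) ⁻¹' C := by
  ext p
  exact mem_tr

theorem interior_tr (C : Set P2) (z : P2) : interior (tr C z) = (· - z) ⁻¹' interior C := by
  rw [tr_eq_preimage]
  exact ((Homeomorph.subRight z).preimage_interior C).symm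

theorem IsCompact.tr (hC : IsCompact C) (z : P2) : IsCompact (tr C z) :=
  hC.image (continuous_const.add continuous_id)

theorem sub_mem_tr_sub_iff (hsym : ∀ c ∈ C, -c ∈ C) (a : P2) :
    a - p ∈ tr C (a - z) ↔ p ∈ tr C z := by
  rw [mem_tr, mem_tr, show a - p - (a - z) = -(p - z) by abel]
  exact ⟨fun h => neg_neg (p - z) ▸ hsym _ h, hsym _⟩

theorem mem_spindle : p ∈ spindle C x y ↔ ∀ z, x ∈ tr C z → y ∈ tr C z → p ∈ tr C z := by
  simp [spindle]

theorem spindle_comm (C : Set P2) (x y : P2) : spindle C x y = spindle C y x := by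
  simp only [spindle, and_comm]

theorem segment_subset_spindle (hC : Convex ℝ C) (x y : P2) : segment ℝ x y ⊆ spindle C x y :=
  fun _ hp => mem_spindle.2 fun z hx hy => (hC.translate z).segment_subset hx hy hp

theorem spindle_self (hC : IsCompact C) (hne : C.Nonempty) (x : P2) : spindle C x x = {x} := by
  refine subset_antisymm (fun p hp => ?_) (singleton_subset_iff.2 (mem_spindle.2 fun _ h _ => h))
  by_contra hpx
  obtain ⟨g, -, hg⟩ := exists_dual_vector ℝ (p - x) (norm_ne_zero_iff.2 (sub_ne_zero.2 hpx))
  obtain ⟨c, hc, hmax⟩ := hC.exists_isMaxOn hne g.continuous.continuousOn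
  have hx : x ∈ tr C (x - c) := mem_tr.2 (by simpa using hc)
  have hpc : p - x + c ∈ C := by
    simpa [sub_add] using mem_tr.1 (mem_spindle.1 hp _ hx hx)
  have hle : g (p - x + c) ≤ g c := hmax hpc
  simp [hg, sub_eq_zero] at hle
  exact hpx hle

theorem spindle_mem_nhds (hC : IsCompact C)
    (h : ∀ z, x ∈ tr C z → y ∈ tr C z → p ∈ interior (tr C z)) : spindle C x y ∈ 𝓝 p := by
  have hZ : IsCompact {z | x ∈ tr C z ∧ y ∈ tr C z} := by
    refine (hC.image (continuous_sub_left x)).of_isClosed_subset ?_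
      fun z hz => ⟨x - z, mem_tr.1 hz.1, sub_sub_cancel x z⟩
    simp only [tr_eq_preimage]
    exact (hC.isClosed.preimage (by fun_prop)).inter (hC.isClosed.preimage (by fun_prop))
  have hnear := hZ.eventually_forall_of_forall_eventually (P := fun q z => q ∈ tr C z)
    fun z hz => by
      have hpz : p - z ∈ interior C := by simpa [interior_tr] using h z hz.1 hz.2
      have hsub : Continuous fun qz : P2 × P2 => qz.1 - qz.2 := by fun_prop
      exact eventually_of_mem (hsub.continuousAt.preimage_mem_nhds (isOpen_interior.mem_nhds hpz))
        fun qz hq => mem_tr.2 (interior_subset hq)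
  filter_upwards [hnear] with q hq
  exact mem_spindle.2 fun z hx hy => hq z ⟨hx, hy⟩

theorem lineMap_mem_tr_sub_smul_iff (r s : ℝ) :
    lineMap x y r ∈ tr C (z - s • (y - x)) ↔ lineMap x y (r + s) ∈ tr C z := by
  rw [mem_tr, mem_tr, lineMap_apply_module', lineMap_apply_module']
  constructor <;> intro h <;> convert h using 1 <;> module

theorem nonneg_of_lineMap_mem_spindle (hC : IsCompact C) (hconv : Convex ℝ C) (hxy : x ≠ y)
    (hx : x ∈ tr C z) (hy : y ∈ tr C z) {t : ℝ} (ht : lineMap x y t ∈ spindle C x y) : 0 ≤ t := by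
  set S := {r : ℝ | lineMap x y r ∈ tr C z}
  have hS : IsCompact S := by
    have hline : (lineMap x y : ℝ → P2) = (· + x) ∘ (· • (y - x)) := by
      ext r : 1
      exact lineMap_apply_module' x y r
    have hemb : IsClosedEmbedding (lineMap x y : ℝ → P2) := hline ▸
      (Homeomorph.addRight x).isClosedEmbedding.comp
        (isClosedEmbedding_smul_left (sub_ne_zero.2 hxy.symm))
    exact hemb.isCompact_preimage (hC.tr z)
  have h0 : (0 : ℝ) ∈ S := by simpa [S] using hx
  have h1 : (1 : ℝ) ∈ S := by simpa [S] using hy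
  have hmin : sInf S ∈ S := hS.sInf_mem ⟨0, h0⟩
  have hmin0 : sInf S ≤ 0 := csInf_le hS.bddBelow h0
  have hconvS : Convex ℝ S := (hconv.translate z).affine_preimage (lineMap x y)
  have hshift : 1 + sInf S ∈ S :=
    hconvS.ordConnected.out hmin h1 ⟨by linarith, by linarith⟩
  -- in this translate, `x` is the first point of the line `xy`
  have hmem := mem_spindle.1 ht (z - sInf S • (y - x))
    (by simpa using (lineMap_mem_tr_sub_smul_iff 0 _).2 (by rwa [zero_add]))
    (by simpa using (lineMap_mem_tr_sub_smul_iff 1 _).2 hshift)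
  linarith [csInf_le hS.bddBelow ((lineMap_mem_tr_sub_smul_iff t _).1 hmem)]

theorem mem_Icc_of_lineMap_mem_spindle (hC : IsCompact C) (hconv : Convex ℝ C) (hxy : x ≠ y)
    (hx : x ∈ tr C z) (hy : y ∈ tr C z) {t : ℝ} (ht : lineMap x y t ∈ spindle C x y) :
    t ∈ Icc 0 1 := by
  refine ⟨nonneg_of_lineMap_mem_spindle hC hconv hxy hx hy ht, ?_⟩
  have := nonneg_of_lineMap_mem_spindle hC hconv hxy.symm hy hx (t := 1 - t)
    (by rwa [lineMap_apply_one_sub, ← spindle_comm])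
  linarith

theorem apply_eq_of_mem_spindle (hsym : ∀ c ∈ C, -c ∈ C) (f : P2 →L[ℝ] ℝ)
    (hmax : ∀ q ∈ tr C z, f q ≤ f x) (hfxy : f x = f y) (hx : x ∈ tr C z) (hy : y ∈ tr C z)
    (hp : p ∈ spindle C x y) : f p = f x := by
  have hx' : x ∈ tr C (x + y - z) := by
    simpa using (sub_mem_tr_sub_iff hsym (x + y)).2 hy
  have hy' : y ∈ tr C (x + y - z) := by
    simpa using (sub_mem_tr_sub_iff hsym (x + y)).2 hx
  have hle := hmax p (mem_spindle.1 hp z hx hy)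
  have hge := hmax _ ((sub_mem_tr_sub_iff hsym (x + y) (p := x + y - p)).1
    (by rw [sub_sub_cancel]; exact mem_spindle.1 hp _ hx' hy'))
  rw [map_sub, map_add] at hge
  linarith

theorem exists_segment_subset_frontier_of_spindle_eq_segment (hC : IsCompact C)
    (hconv : Convex ℝ C) (h : spindle C x y = segment ℝ x y) :
    ∃ z, segment ℝ x y ⊆ frontier (tr C z) := by
  by_contra! hno
  have hnhds : spindle C x y ∈ 𝓝 (midpoint ℝ x y) := spindle_mem_nhds hC fun z hx hy => by
    by_contra hm
    exact hno z ((hconv.translate z).segment_subset_frontier hx hy hm)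
  rw [h, ← mem_interior_iff_mem_nhds, interior_segment_eq_empty (by simp) x y] at hnhds
  exact hnhds

theorem spindle_subset_segment (hC : SymDisk C) (h : segment ℝ x y ⊆ frontier (tr C z)) :
    spindle C x y ⊆ segment ℝ x y := by
  obtain ⟨hcomp, hconv, hint, hsym⟩ := hC
  have hK : IsClosed (tr C z) := (hcomp.tr z).isClosed
  have hx : x ∈ tr C z := hK.frontier_subset (h (left_mem_segment ℝ x y))
  have hy : y ∈ tr C z := hK.frontier_subset (h (right_mem_segment ℝ x y))
  rcases eq_or_ne x y with rfl | hxy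
  · rw [spindle_self hcomp ⟨_, mem_tr.1 hx⟩, segment_same]
  have hintK : (interior (tr C z)).Nonempty := by
    obtain ⟨c, hc⟩ := hint
    exact ⟨z + c, by simpa [interior_tr] using hc⟩
  obtain ⟨f, hf0, hmax⟩ := (hconv.translate z).exists_forall_le_of_notMem_interior hintK
    (h (midpoint_mem_segment x y)).2
  have hmid : f x + f y = 2 * f (midpoint ℝ x y) := by
    rw [midpoint_eq_smul_add, map_smul, map_add, smul_eq_mul, invOf_eq_inv]
    ring
  have hfx : f x = f (midpoint ℝ x y) := by linarith [hmax x hx, hmax y hy]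
  have hfy : f y = f (midpoint ℝ x y) := by linarith [hmax x hx, hmax y hy]
  intro p hp
  have hfp : f p = f x :=
    apply_eq_of_mem_spindle hsym f (hfx ▸ hmax) (hfx.trans hfy.symm) hx hy hp
  obtain ⟨t, ht⟩ := exists_smul_eq_of_apply_eq_zero (V := P2) (by simp) (f := f.toLinearMap)
    (w := p - x) (fun h0 => hf0 (ContinuousLinearMap.coe_injective h0))
    (sub_ne_zero.2 hxy.symm) (by simp [hfx, hfy]) (by simp [hfp])
  have hpt : lineMap x y t = p := by rw [lineMap_apply_module', ht, sub_add_cancel]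
  rw [segment_eq_image_lineMap]
  exact ⟨t, mem_Icc_of_lineMap_mem_spindle hcomp hconv hxy hx hy (hpt ▸ hp), hpt⟩

end Spindle

theorem stmt10 (C : Set P2) (hC : SymDisk C) (x y : P2) :
    spindle C x y = segment ℝ x y ↔ ∃ z : P2, segment ℝ x y ⊆ frontier (tr C z) :=
  ⟨exists_segment_subset_frontier_of_spindle_eq_segment hC.1 hC.2.1, fun ⟨_, hz⟩ =>
    (spindle_subset_segment hC hz).antisymm (segment_subset_spindle hC.2.1 x y)⟩
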